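/- arXiv:cs/0512009 — 2 statements merged into one kernel-verified Lean document; each statement's English description precedes it below -/
import Mathlib

section
/- A function f : ℝ → ℂ that is bounded and continuous is almost periodic in the sense that the set of translates {x ↦ f(x + s) : s ∈ ℝ} is totally bounded in the sup norm if and only if f satisfies Bohr's condition: for every ε > 0 there exists l > 0 such that every interval [t, t + l] contains a number y with |f(x) − f(x + y)| < ε for all x ∈ ℝ. -/
open BoundedContinuousFunction

/-- The translate `x ↦ f (x + s)` of a bounded continuous function on `ℝ`. -/
noncomputable def translateR (f : ℝ →ᵇ ℂ) (s : ℝ) : ℝ →ᵇ ℂ :=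
  f.compContinuous ⟨fun x => x + s, by continuity⟩

lemma translateR_apply (f : ℝ →ᵇ ℂ) (s x : ℝ) : translateR f s x = f (x + s) := rfl

lemma dist_translateR_le (f : ℝ →ᵇ ℂ) {u v C : ℝ} (hC : 0 ≤ C)
    (h : ∀ x, ‖f (x + u) - f (x + v)‖ ≤ C) :
    dist (translateR f u) (translateR f v) ≤ C := by
  rw [BoundedContinuousFunction.dist_le hC]
  intro x
  rw [translateR_apply, translateR_apply, dist_eq_norm]
  exact h x

/-- Bohr's condition implies a form of uniform continuity. -/
lemma bohr_unif (f : ℝ →ᵇ ℂ)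
    (hb : ∀ ε > 0, ∃ l > 0, ∀ t : ℝ, ∃ y ∈ Set.Icc t (t + l),
      ∀ x : ℝ, ‖f x - f (x + y)‖ < ε) :
    ∀ ε > 0, ∃ δ > 0, ∀ a b : ℝ, |a - b| ≤ δ → ‖f a - f b‖ ≤ ε := by
  intro ε hε
  obtain ⟨l, hl, hT⟩ := hb (ε / 3) (by positivity)
  have hufc : UniformContinuousOn f (Set.Icc (-1 : ℝ) (l + 1)) :=
    isCompact_Icc.uniformContinuousOn_of_continuous f.continuous.continuousOn
  obtain ⟨δ', hδ', hδ's⟩ := Metric.uniformContinuousOn_iff.1 hufc (ε / 3) (by positivity)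
  refine ⟨min (δ' / 2) 1, by positivity, fun a b hab => ?_⟩
  obtain ⟨y, hy, hy'⟩ := hT (-a)
  have hab1 : |a - b| ≤ 1 := hab.trans (min_le_right _ _)
  have habδ : |a - b| ≤ δ' / 2 := hab.trans (min_le_left _ _)
  have h1 : a + y ∈ Set.Icc (-1 : ℝ) (l + 1) := by
    constructor <;> [linarith [hy.1]; linarith [hy.2]]
  have h2 : b + y ∈ Set.Icc (-1 : ℝ) (l + 1) := by
    rw [abs_le] at hab1
    constructor <;> [linarith [hy.1]; linarith [hy.2]]
  have h3 : dist (a + y) (b + y) < δ' := by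
    rw [Real.dist_eq]
    have : a + y - (b + y) = a - b := by ring
    rw [this]; linarith
  have h4 : dist (f (a + y)) (f (b + y)) < ε / 3 := hδ's _ h1 _ h2 h3
  rw [dist_eq_norm] at h4
  have h5 := hy' a
  have h6 := hy' b
  calc ‖f a - f b‖ = ‖(f a - f (a + y)) + (f (a + y) - f (b + y)) + (f (b + y) - f b)‖ := by
        ring_nf
    _ ≤ ‖f a - f (a + y)‖ + ‖f (a + y) - f (b + y)‖ + ‖f (b + y) - f b‖ := by
        exact (norm_add_le _ _).trans (by gcongr; exact norm_add_le _ _)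
    _ ≤ ε := by
        rw [norm_sub_rev (f (b + y))]
        linarith

theorem totallyBounded_translates_iff_bohr (f : ℝ →ᵇ ℂ) :
    TotallyBounded {g : ℝ →ᵇ ℂ | ∃ s : ℝ, g = translateR f s} ↔
    ∀ ε > 0, ∃ l > 0, ∀ t : ℝ, ∃ y ∈ Set.Icc t (t + l),
      ∀ x : ℝ, ‖f x - f (x + y)‖ < ε := by
  set S : Set (ℝ →ᵇ ℂ) := {g : ℝ →ᵇ ℂ | ∃ s : ℝ, g = translateR f s} with hS
  constructor
  · -- totally bounded → Bohr
    intro htb ε hε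
    obtain ⟨t, hts, htf, hcov⟩ :=
      EMetric.totallyBounded_iff'.1 htb (ENNReal.ofReal ε) (ENNReal.ofReal_pos.2 hε)
    classical
    set σ : (ℝ →ᵇ ℂ) → ℝ := fun g =>
      if h : ∃ s : ℝ, g = translateR f s then h.choose else 0 with hσ
    have hσs : ∀ g ∈ t, g = translateR f (σ g) := by
      intro g hg
      have h : ∃ s : ℝ, g = translateR f s := hts hg
      simp only [hσ, dif_pos h]
      exact h.choose_spec
    obtain ⟨M, hM⟩ : ∃ M : ℝ, ∀ g ∈ t, |σ g| ≤ M := by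
      obtain ⟨M, hM⟩ := (htf.image fun g => |σ g|).bddAbove
      exact ⟨M, fun g hg => hM ⟨g, hg, rfl⟩⟩
    set M' : ℝ := max M 0 with hM'
    have hM'0 : 0 ≤ M' := le_max_right _ _
    refine ⟨2 * M' + 1, by positivity, fun t₀ => ?_⟩
    set a : ℝ := t₀ + M' + 1 / 2 with ha
    have hmem : translateR f a ∈ S := ⟨a, rfl⟩
    obtain ⟨g, hg, hball⟩ := Set.mem_iUnion₂.1 (hcov hmem)
    have hd : dist (translateR f a) g < ε := by
      rwa [EMetric.mem_ball, edist_lt_ofReal] at hball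
    rw [hσs g hg] at hd
    have hσM : |σ g| ≤ M' := (hM g hg).trans (le_max_left _ _)
    rw [abs_le] at hσM
    have hy1 : t₀ ≤ a - σ g := by simp only [ha]; linarith [hσM.2]
    have hy2 : a - σ g ≤ t₀ + (2 * M' + 1) := by simp only [ha]; linarith [hσM.1]
    refine ⟨a - σ g, ⟨hy1, hy2⟩, fun x => ?_⟩
    have h1 := BoundedContinuousFunction.dist_coe_le_dist
      (f := translateR f a) (g := translateR f (σ g)) (x - σ g)
    have h2 : dist (translateR f a (x - σ g)) (translateR f (σ g) (x - σ g)) < ε :=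
      lt_of_le_of_lt h1 hd
    rw [translateR_apply, translateR_apply, dist_eq_norm] at h2
    have e1 : x - σ g + σ g = x := by ring
    have e2 : x - σ g + a = x + (a - σ g) := by ring
    rw [e1, e2] at h2
    rw [norm_sub_rev]
    exact h2
  · -- Bohr → totally bounded
    intro hb
    rw [Metric.totallyBounded_iff]
    intro ε hε
    obtain ⟨l, hl, hT⟩ := hb (ε / 3) (by positivity)
    obtain ⟨δ, hδ, hδ'⟩ := bohr_unif f hb (ε / 3) (by positivity)
    set n : ℕ := ⌈l / δ⌉₊ + 1 with hn
    refine ⟨(fun i : ℕ => translateR f (i * δ)) '' ↑(Finset.range n),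
      (Finset.range n).finite_toSet.image _, ?_⟩
    rintro g ⟨s, rfl⟩
    obtain ⟨y, hy, hy'⟩ := hT (-s)
    set z : ℝ := s + y with hz
    have hz0 : 0 ≤ z := by simp only [hz]; linarith [hy.1]
    have hzl : z ≤ l := by simp only [hz]; linarith [hy.2]
    set i : ℕ := ⌊z / δ⌋₊ with hi
    have hin : i < n := by
      have h2 : i ≤ ⌈l / δ⌉₊ := le_trans (Nat.floor_le_floor (by gcongr)) (Nat.floor_le_ceil _)
      omega
    have hiz : |z - i * δ| ≤ δ := by
      have h1 : (i : ℝ) * δ ≤ z := by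
        have := Nat.floor_le (show (0:ℝ) ≤ z / δ by positivity)
        calc (i : ℝ) * δ ≤ z / δ * δ := by gcongr
          _ = z := by field_simp
      have h2 : z < (i + 1) * δ := by
        have := Nat.lt_floor_add_one (z / δ)
        calc z = z / δ * δ := by field_simp
          _ < ((i : ℝ) + 1) * δ := by gcongr
      rw [abs_le]
      constructor <;> nlinarith
    have hd1 : dist (translateR f s) (translateR f z) ≤ ε / 3 := by
      refine dist_translateR_le f (by positivity) fun x => ?_
      have := hy' (x + s)
      have e : x + z = x + s + y := by simp only [hz]; ring
      rw [e]
      exact this.le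
    have hd2 : dist (translateR f z) (translateR f (i * δ)) ≤ ε / 3 := by
      refine dist_translateR_le f (by positivity) fun x => ?_
      refine hδ' _ _ ?_
      have e : x + z - (x + i * δ) = z - i * δ := by ring
      rw [e]
      exact hiz
    refine Set.mem_iUnion₂.2 ⟨translateR f (i * δ), ⟨i, Finset.mem_coe.2 (Finset.mem_range.2 hin), rfl⟩, ?_⟩
    rw [Metric.mem_ball]
    calc dist (translateR f s) (translateR f (i * δ))
        ≤ dist (translateR f s) (translateR f z) + dist (translateR f z) (translateR f (i * δ)) :=
          dist_triangle _ _ _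
      _ ≤ ε / 3 + ε / 3 := by linarith
      _ < ε := by linarith
end

section
/- Let G be a compact group. Every nonzero closed two-sided ideal I of the convolution algebra L²(G) contains a nonzero central element. In particular, for f ∈ I with f ≠ 0, the element f̃ ∗ f is nonzero since (f̃ ∗ f)(e) = ‖f‖₂², and the central projection P_Z f := λx. ∫ f(z x z⁻¹) dz of a suitable element of I is nonzero and lies in I. -/
/-!
Take `0 ≠ f ∈ I` and put `b = f ∗ f̃` and `k = b̃ ∗ b`. Both are continuous, with
`b(e) = ‖f‖₂² ≠ 0` and `k(e) = ‖b‖₂² ≠ 0`. Since `k(z x z⁻¹) = (b̃(z ·) ∗ b(· z⁻¹))(x)` and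
`b(· w) = f ∗ f̃(· w) ∈ I`, every conjugate of `k` lies in `I`. Their Haar average
`c(x) = ∫ k(z x z⁻¹) dz`, a `C(G)`-valued Bochner integral, lies in the closed convex set `I`; it
is a class function, hence central, and `c(e) = k(e) ≠ 0`.
-/

open MeasureTheory ComplexConjugate

theorem ContinuousMap.toLp_eq_memLp_toLp {α E : Type*} [TopologicalSpace α] [CompactSpace α]
    [MeasurableSpace α] [BorelSpace α] [NormedAddCommGroup E] [NormedSpace ℂ E]
    [SecondCountableTopologyEither α E] {μ : Measure α} [IsFiniteMeasure μ] (φ : C(α, E))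
    {F : α → E} (hF : MemLp F 2 μ) (h : ⇑φ = F) : ContinuousMap.toLp 2 μ ℂ φ = hF.toLp F := by
  subst h
  exact Lp.ext ((ContinuousMap.coeFn_toLp μ φ).trans hF.coeFn_toLp.symm)

theorem ContinuousMap.integral_norm_sq_pos {X E : Type*} [TopologicalSpace X] [CompactSpace X]
    [MeasurableSpace X] [OpensMeasurableSpace X] [NormedAddCommGroup E] {μ : Measure X}
    [μ.IsOpenPosMeasure] [IsFiniteMeasureOnCompacts μ] (φ : C(X, E)) {x : X} (hx : φ x ≠ 0) :
    0 < ∫ y, ‖φ y‖ ^ 2 ∂μ :=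
  (by fun_prop : Continuous fun y => ‖φ y‖ ^ 2).integral_pos_of_hasCompactSupport_nonneg_nonzero
    (.of_compactSpace _) (fun y => by positivity) (x := x) (by simpa using hx)

theorem MeasureTheory.Lp.integral_norm_sq_ne_zero {α E : Type*} [MeasurableSpace α]
    [NormedAddCommGroup E] {μ : Measure α} {f : Lp E 2 μ} (hf : f ≠ 0) :
    ∫ y, ‖f y‖ ^ 2 ∂μ ≠ 0 := by
  have hint : Integrable (fun y => ‖f y‖ ^ 2) μ := (Lp.memLp f).integrable_norm_pow two_ne_zero
  rw [Ne, integral_eq_zero_iff_of_nonneg (fun y => by positivity) hint]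
  refine fun h => hf (Lp.eq_zero_iff_ae_eq_zero.mpr ?_)
  filter_upwards [h] with y hy
  simpa using hy

namespace MeasureTheory.Measure

variable {G : Type*} [Group G] [TopologicalSpace G] [IsTopologicalGroup G] [CompactSpace G]
  [MeasurableSpace G] [BorelSpace G] (μ : Measure G) [μ.IsHaarMeasure] [IsProbabilityMeasure μ]

instance isMulRightInvariant_of_isProbabilityMeasure : μ.IsMulRightInvariant where
  map_mul_right_eq_self g :=
    have : IsProbabilityMeasure (μ.map (· * g)) :=
      isProbabilityMeasure_map (measurable_mul_const g).aemeasurable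
    isHaarMeasure_eq_of_isProbabilityMeasure _ μ

instance isInvInvariant_of_isProbabilityMeasure : μ.IsInvInvariant where
  inv_eq_self :=
    have : IsProbabilityMeasure μ.inv := isProbabilityMeasure_map measurable_inv.aemeasurable
    have : μ.inv.IsHaarMeasure := { }
    isHaarMeasure_eq_of_isProbabilityMeasure _ μ

end MeasureTheory.Measure

namespace GroupConvolution

variable {G : Type*} [Group G] [MeasurableSpace G]

noncomputable def conv (μ : Measure G) (u v : G → ℂ) (x : G) : ℂ := ∫ y, u y * v (y⁻¹ * x) ∂μ

def invol (u : G → ℂ) (x : G) : ℂ := conj (u x⁻¹)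

theorem conv_mul_right (μ : Measure G) (u v : G → ℂ) (w x : G) :
    conv μ u (fun t => v (t * w)) x = conv μ u v (x * w) := by
  simp only [conv, mul_assoc]

theorem conv_self_invol_apply_one (μ : Measure G) (u : G → ℂ) :
    conv μ u (invol u) 1 = ((∫ y, ‖u y‖ ^ 2 ∂μ : ℝ) : ℂ) := by
  rw [← integral_complex_ofReal]
  refine integral_congr_ae (.of_forall fun y => ?_)
  simp [invol, Complex.mul_conj']

theorem measurePreserving_inv_mul (μ : Measure G) [MeasurableMul G] [MeasurableInv G]
    [μ.IsMulLeftInvariant] [μ.IsInvInvariant] (x : G) :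
    MeasurePreserving (fun y => y⁻¹ * x) μ μ := by
  convert (Measure.measurePreserving_inv μ).comp (measurePreserving_mul_left μ x⁻¹) using 1
  funext y
  simp

theorem memLp_invol {μ : Measure G} [MeasurableInv G] [μ.IsInvInvariant] {u : G → ℂ}
    (hu : MemLp u 2 μ) : MemLp (invol u) 2 μ :=
  (hu.comp_measurePreserving (Measure.measurePreserving_inv μ)).star

theorem integral_conj_mul_self_inv (μ : Measure G) [MeasurableInv G] [μ.IsInvInvariant]
    (u : G → ℂ) : ∫ y, conj (u y⁻¹) * u y⁻¹ ∂μ = ((∫ y, ‖u y‖ ^ 2 ∂μ : ℝ) : ℂ) := by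
  rw [integral_inv_eq_self (fun y => conj (u y) * u y), ← integral_complex_ofReal]
  simp [Complex.conj_mul']

theorem conv_invol_self_apply_one (μ : Measure G) [MeasurableInv G] [μ.IsInvInvariant]
    (u : G → ℂ) : conv μ (invol u) u 1 = ((∫ y, ‖u y‖ ^ 2 ∂μ : ℝ) : ℂ) := by
  simpa [conv, invol] using integral_conj_mul_self_inv μ u

theorem conv_conj_translate (μ : Measure G) [MeasurableMul G] [μ.IsMulLeftInvariant]
    (u v : G → ℂ) (z x : G) :
    conv μ (fun t => u (z * t)) (fun t => v (t * z⁻¹)) x = conv μ u v (z * x * z⁻¹) := by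
  rw [conv, ← integral_mul_left_eq_self _ z⁻¹]
  simp only [conv, mul_inv_cancel_left, mul_inv_rev, inv_inv, mul_assoc]

theorem conv_comm_of_mul_comm (μ : Measure G) [MeasurableMul G] [MeasurableInv G]
    [μ.IsMulLeftInvariant] [μ.IsInvInvariant] {c : G → ℂ} (hc : ∀ a b, c (a * b) = c (b * a))
    (g : G → ℂ) : conv μ g c = conv μ c g := by
  funext x
  calc conv μ g c x = ∫ y, g y⁻¹ * c (x * y) ∂μ := by
        rw [conv, ← integral_inv_eq_self]
        simp only [inv_inv, hc _ x]
    _ = ∫ y, c (x * y) * g ((x * y)⁻¹ * x) ∂μ := by simp [mul_comm]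
    _ = conv μ c g x := integral_mul_left_eq_self (fun y => c y * g (y⁻¹ * x)) x

theorem conv_congr_ae {μ : Measure G} [MeasurableMul G] [MeasurableInv G] [μ.IsMulLeftInvariant]
    [μ.IsInvInvariant] {u u' v v' : G → ℂ} (hu : u =ᵐ[μ] u') (hv : v =ᵐ[μ] v') :
    conv μ u v = conv μ u' v' := by
  funext x
  refine integral_congr_ae ?_
  filter_upwards [hu, (measurePreserving_inv_mul μ x).quasiMeasurePreserving.ae_eq_comp hv]
    with y huy hvy
  simp_all

section Compact

variable [TopologicalSpace G] [IsTopologicalGroup G] [CompactSpace G] [BorelSpace G]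
  {μ : Measure G} [μ.IsHaarMeasure]

theorem conv_eq_inner [IsProbabilityMeasure μ] (u v : Lp ℂ 2 μ) (x : G) :
    conv μ u v x =
      inner ℂ (star u) (Lp.compMeasurePreserving _ (measurePreserving_inv_mul μ x) v) := by
  rw [L2.inner_def]
  refine integral_congr_ae ?_
  filter_upwards [Lp.coeFn_star u,
    Lp.coeFn_compMeasurePreserving v (measurePreserving_inv_mul μ x)] with y hu hv
  rw [RCLike.inner_apply, hu, hv]
  simp [mul_comm]

theorem continuous_conv [IsProbabilityMeasure μ] {u v : G → ℂ} (hu : MemLp u 2 μ)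
    (hv : MemLp v 2 μ) : Continuous (conv μ u v) := by
  rw [conv_congr_ae hu.coeFn_toLp.symm hv.coeFn_toLp.symm, funext (conv_eq_inner _ _)]
  let translate : C(G, C(G, G)) := ContinuousMap.curry ⟨fun p => p.2⁻¹ * p.1, by fun_prop⟩
  exact continuous_const.inner (continuous_const.compMeasurePreservingLp translate.continuous
    (measurePreserving_inv_mul μ) ENNReal.ofNat_ne_top)

noncomputable def conjugates (h : C(G, ℂ)) : C(G, C(G, ℂ)) :=
  ContinuousMap.curry ⟨fun p => h (p.1 * p.2 * p.1⁻¹), by fun_prop⟩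

variable (μ) in
noncomputable def conjAverage (h : C(G, ℂ)) : C(G, ℂ) := ∫ z, conjugates h z ∂μ

theorem integrable_conjugates (h : C(G, ℂ)) : Integrable (conjugates h) μ :=
  (conjugates h).continuous.integrable_of_hasCompactSupport (.of_compactSpace _)

theorem conjAverage_apply (h : C(G, ℂ)) (x : G) :
    conjAverage μ h x = ∫ z, h (z * x * z⁻¹) ∂μ :=
  ((ContinuousMap.evalCLM ℂ x).integral_comp_comm (integrable_conjugates h)).symm

variable [IsProbabilityMeasure μ]

theorem conjAverage_one (h : C(G, ℂ)) : conjAverage μ h 1 = h 1 := by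
  simp [conjAverage_apply]

theorem conjAverage_mul_comm (h : C(G, ℂ)) (a b : G) :
    conjAverage μ h (a * b) = conjAverage μ h (b * a) := by
  rw [conjAverage_apply, conjAverage_apply, ← integral_mul_right_eq_self _ b]
  simp only [mul_inv_rev, mul_assoc, mul_inv_cancel_left]

theorem conv_toLp_conjAverage_comm (h : C(G, ℂ)) (g : G → ℂ) :
    conv μ g (ContinuousMap.toLp 2 μ ℂ (conjAverage μ h)) =
      conv μ (ContinuousMap.toLp 2 μ ℂ (conjAverage μ h)) g := by
  have hc := ContinuousMap.coeFn_toLp (p := 2) (𝕜 := ℂ) μ (conjAverage μ h)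
  rw [conv_congr_ae .rfl hc, conv_congr_ae hc .rfl]
  exact conv_comm_of_mul_comm μ (conjAverage_mul_comm h) g

theorem toLp_conjAverage_ne_zero {h : C(G, ℂ)} (h1 : h 1 ≠ 0) :
    ContinuousMap.toLp 2 μ ℂ (conjAverage μ h) ≠ 0 := by
  rw [Ne, map_eq_zero_iff _ (ContinuousMap.toLp_injective μ)]
  exact fun h0 => h1 (by simpa [conjAverage_one] using congrFun (congrArg (⇑) h0) 1)

theorem toLp_conjAverage_mem {S : Submodule ℂ (Lp ℂ 2 μ)} (hS : IsClosed (S : Set (Lp ℂ 2 μ)))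
    {h : C(G, ℂ)} (hmem : ∀ z, ContinuousMap.toLp 2 μ ℂ (conjugates h z) ∈ S) :
    ContinuousMap.toLp 2 μ ℂ (conjAverage μ h) ∈ S := by
  rw [conjAverage, ← ContinuousLinearMap.integral_comp_comm _ (integrable_conjugates h)]
  exact (S.restrictScalars ℝ).convex.integral_mem hS (.of_forall hmem)
    ((ContinuousMap.toLp 2 μ ℂ).integrable_comp (integrable_conjugates h))

variable (μ) in
def IsLeftConvIdeal (S : Submodule ℂ (Lp ℂ 2 μ)) : Prop :=
  ∀ g f : Lp ℂ 2 μ, f ∈ S → ∀ hc : MemLp (conv μ g f) 2 μ, hc.toLp _ ∈ S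

variable (μ) in
def IsRightConvIdeal (S : Submodule ℂ (Lp ℂ 2 μ)) : Prop :=
  ∀ g f : Lp ℂ 2 μ, f ∈ S → ∀ hc : MemLp (conv μ f g) 2 μ, hc.toLp _ ∈ S

variable {S : Submodule ℂ (Lp ℂ 2 μ)}

theorem IsRightConvIdeal.toLp_mem (hS : IsRightConvIdeal μ S) {f : Lp ℂ 2 μ} (hf : f ∈ S)
    {v : G → ℂ} (hv : MemLp v 2 μ) {φ : C(G, ℂ)} (hφ : ⇑φ = conv μ f v) :
    ContinuousMap.toLp 2 μ ℂ φ ∈ S := by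
  rw [conv_congr_ae .rfl hv.coeFn_toLp.symm] at hφ
  have hc : MemLp (conv μ f hv.toLp) 2 μ := hφ ▸ ContinuousMap.memLp μ ℂ φ
  rw [ContinuousMap.toLp_eq_memLp_toLp φ hc hφ]
  exact hS hv.toLp f hf hc

theorem IsLeftConvIdeal.toLp_mem (hS : IsLeftConvIdeal μ S) {u : G → ℂ} (hu : MemLp u 2 μ)
    {ψ : C(G, ℂ)} (hψ : ContinuousMap.toLp 2 μ ℂ ψ ∈ S) {φ : C(G, ℂ)} (hφ : ⇑φ = conv μ u ψ) :
    ContinuousMap.toLp 2 μ ℂ φ ∈ S := by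
  rw [conv_congr_ae hu.coeFn_toLp.symm
    (ContinuousMap.coeFn_toLp (p := 2) (𝕜 := ℂ) μ ψ).symm] at hφ
  have hc : MemLp (conv μ hu.toLp (ContinuousMap.toLp 2 μ ℂ ψ)) 2 μ :=
    hφ ▸ ContinuousMap.memLp μ ℂ φ
  rw [ContinuousMap.toLp_eq_memLp_toLp φ hc hφ]
  exact hS hu.toLp _ hψ hc

theorem IsRightConvIdeal.toLp_comp_mulRight_mem (hS : IsRightConvIdeal μ S) {f : Lp ℂ 2 μ}
    (hf : f ∈ S) {v : G → ℂ} (hv : MemLp v 2 μ) {φ : C(G, ℂ)} (hφ : ⇑φ = conv μ f v) (w : G) :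
    ContinuousMap.toLp 2 μ ℂ (φ.comp (ContinuousMap.mulRight w)) ∈ S :=
  hS.toLp_mem hf (hv.comp_measurePreserving (measurePreserving_mul_right μ w)) <|
    funext fun x => (congrFun hφ (x * w)).trans (conv_mul_right μ f v w x).symm

theorem IsLeftConvIdeal.toLp_conjugates_mem (hS : IsLeftConvIdeal μ S) {u : G → ℂ}
    (hu : MemLp u 2 μ) {ψ : C(G, ℂ)}
    (hψ : ∀ w, ContinuousMap.toLp 2 μ ℂ (ψ.comp (ContinuousMap.mulRight w)) ∈ S) {φ : C(G, ℂ)}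
    (hφ : ⇑φ = conv μ u ψ) (z : G) : ContinuousMap.toLp 2 μ ℂ (conjugates φ z) ∈ S :=
  hS.toLp_mem (hu.comp_measurePreserving (measurePreserving_mul_left μ z)) (hψ z⁻¹) <|
    funext fun x => (congrFun hφ (z * x * z⁻¹)).trans (conv_conj_translate μ u ψ z x).symm

end Compact

end GroupConvolution

open GroupConvolution in
/-- Every nonzero closed two-sided ideal of the convolution algebra `L²(G)` of a compact
group contains a nonzero central element.  In particular `(f̃ ∗ f)(e) = ‖f‖₂²`. -/
theorem nonzero_closed_ideal_contains_central_element {G : Type*} [Group G]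
    [TopologicalSpace G] [IsTopologicalGroup G] [CompactSpace G] [MeasurableSpace G]
    [BorelSpace G] (μ : Measure G) [μ.IsHaarMeasure] [IsProbabilityMeasure μ]
    (S : Submodule ℂ (Lp ℂ 2 μ)) (hS : IsClosed (S : Set (Lp ℂ 2 μ)))
    -- left ideal
    (hleft : ∀ (g f : Lp ℂ 2 μ), f ∈ S →
      ∀ hc : MemLp (fun x => ∫ y, g y * f (y⁻¹ * x) ∂μ) 2 μ, hc.toLp _ ∈ S)
    -- right ideal
    (hright : ∀ (g f : Lp ℂ 2 μ), f ∈ S →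
      ∀ hc : MemLp (fun x => ∫ y, f y * g (y⁻¹ * x) ∂μ) 2 μ, hc.toLp _ ∈ S)
    -- the ideal is nonzero
    (hne : ∃ f ∈ S, f ≠ 0) :
    -- (f̃ ∗ f)(e) = ‖f‖₂²
    (∀ f : Lp ℂ 2 μ, (∫ y, (starRingEnd ℂ) (f y⁻¹) * f y⁻¹ ∂μ) =
      ((∫ y, ‖f y‖ ^ 2 ∂μ : ℝ) : ℂ)) ∧
    -- the ideal contains a nonzero central element
    (∃ c ∈ S, c ≠ 0 ∧ ∀ g : Lp ℂ 2 μ, ∀ᵐ x ∂μ,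
      (∫ y, g y * c (y⁻¹ * x) ∂μ) = ∫ y, c y * g (y⁻¹ * x) ∂μ) := by
  refine ⟨fun f => integral_conj_mul_self_inv μ f, ?_⟩
  obtain ⟨f, hfS, hf⟩ := hne
  have hf_invol : MemLp (invol f) 2 μ := memLp_invol (Lp.memLp f)
  let b : C(G, ℂ) := ⟨conv μ f (invol f), continuous_conv (Lp.memLp f) hf_invol⟩
  have hb : MemLp b 2 μ := ContinuousMap.memLp μ ℂ b
  let k : C(G, ℂ) := ⟨conv μ (invol b) b, continuous_conv (memLp_invol hb) hb⟩
  have hb1 : b 1 ≠ 0 := by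
    simpa [b, conv_self_invol_apply_one] using Lp.integral_norm_sq_ne_zero hf
  have hk1 : k 1 ≠ 0 := by
    simpa [k, conv_invol_self_apply_one] using (b.integral_norm_sq_pos (μ := μ) hb1).ne'
  have hconj : ∀ z, ContinuousMap.toLp 2 μ ℂ (conjugates k z) ∈ S :=
    IsLeftConvIdeal.toLp_conjugates_mem hleft (memLp_invol hb)
      (IsRightConvIdeal.toLp_comp_mulRight_mem hright hfS hf_invol rfl) rfl
  exact ⟨_, toLp_conjAverage_mem hS hconj, toLp_conjAverage_ne_zero hk1,
    fun g => .of_forall (congrFun (conv_toLp_conjAverage_comm k g))⟩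
end
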